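/- Let k ≥ 1 and let A be a real 2 × k matrix (A : Fin 2 → Fin k → ℝ) whose column differences d j = A 0 j - A 1 j are sorted nondecreasingly: d 0 ≤ d 1 ≤ ⋯ ≤ d (k-1). Set w = (d (k-1) - d 0)/2 and h = (d (k-1) + d 0)/2, and define R 0 = 0, R 1 = -h, and C j = A 0 j + w if d j ≤ h and C j = A 0 j - w otherwise. Then |A i j - R i - C j| ≤ w for all i ∈ Fin 2 and j ∈ Fin k. -/
import Mathlib


theorem two_row_profile_witness (k : ℕ) (hk : 1 ≤ k) (A : Fin 2 → Fin k → ℝ)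
    (hmono : Monotone fun j : Fin k => A 0 j - A 1 j) :
    let d : Fin k → ℝ := fun j => A 0 j - A 1 j
    let w : ℝ := (d ⟨k - 1, by omega⟩ - d ⟨0, by omega⟩) / 2
    let h : ℝ := (d ⟨k - 1, by omega⟩ + d ⟨0, by omega⟩) / 2
    let R : Fin 2 → ℝ := ![0, -h]
    let C : Fin k → ℝ := fun j => if d j ≤ h then A 0 j + w else A 0 j - w
    ∀ (i : Fin 2) (j : Fin k), |A i j - R i - C j| ≤ w := by
  intro d w h R C i j
  have h0 : d ⟨0, by omega⟩ ≤ d j := hmono (by simp [Fin.le_def])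
  have h1 : d j ≤ d ⟨k - 1, by omega⟩ := hmono (by simp [Fin.le_def]; omega)
  have hd : d j = A 0 j - A 1 j := rfl
  fin_cases i <;>
    simp only [R, C, w, h, d, Fin.mk_zero, Fin.mk_one, Matrix.cons_val_zero,
      Matrix.cons_val_one, Matrix.head_cons] <;>
    rw [abs_le] <;> constructor <;> split <;> rename_i hc <;>
    simp only [d] at h0 h1 <;> linarith
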